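/- Let j > 0 be a real number and let A, A′, B, B′ be random variables on a common probability space such that |A| ≤ 1 and |A′| ≤ 1 almost surely, and |B| ≤ j and |B′| ≤ j almost surely. Then |E[AB] − E[AB′]| + |E[A′B] + E[A′B′]| ≤ 2j. In particular, for bounded observables normalized to take values in [−1, 1], the CHSH bound |E[AB] − E[AB′]| + |E[A′B] + E[A′B′]| ≤ 2 holds. -/

import Mathlib

/-!
As `|a| ≤ 1` and `|a'| ≤ 1`, the two terms are bounded by `E|b - b'|` and `E|b + b'|`, and
pointwise `|b - b'| + |b + b'| = 2 max(|b|, |b'|) ≤ 2j`.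
-/

open MeasureTheory

theorem abs_sub_add_abs_add_eq_two_mul_max {α : Type*} [Field α] [LinearOrder α]
    [IsStrictOrderedRing α] (a b : α) : |a - b| + |a + b| = 2 * max |a| |b| := by
  rcases abs_cases (a - b) with ⟨h₁, _⟩ | ⟨h₁, _⟩ <;>
  rcases abs_cases (a + b) with ⟨h₂, _⟩ | ⟨h₂, _⟩ <;>
  rcases abs_cases a with ⟨h₃, _⟩ | ⟨h₃, _⟩ <;>
  rcases abs_cases b with ⟨h₄, _⟩ | ⟨h₄, _⟩ <;>
  rcases max_cases |a| |b| with ⟨h₅, _⟩ | ⟨h₅, _⟩ <;>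
  · rw [h₁, h₂, h₅]
    linarith

section

variable {Ω : Type*} [MeasurableSpace Ω] {μ : Measure Ω}

theorem abs_integral_mul_le_integral_abs {a f : Ω → ℝ} (ha : ∀ᵐ ω ∂μ, |a ω| ≤ 1)
    (hf : Integrable f μ) : |∫ ω, a ω * f ω ∂μ| ≤ ∫ ω, |f ω| ∂μ :=
  calc |∫ ω, a ω * f ω ∂μ| ≤ ∫ ω, |a ω * f ω| ∂μ := abs_integral_le_integral_abs
    _ ≤ ∫ ω, |f ω| ∂μ := by
      refine integral_mono_of_nonneg (.of_forall fun _ ↦ abs_nonneg _) hf.abs ?_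
      filter_upwards [ha] with ω hω
      rw [abs_mul]
      exact mul_le_of_le_one_left (abs_nonneg _) hω

theorem integral_abs_sub_add_integral_abs_add_le [IsProbabilityMeasure μ] {b b' : Ω → ℝ}
    {j : ℝ} (hb : Integrable b μ) (hb' : Integrable b' μ) (hbj : ∀ᵐ ω ∂μ, |b ω| ≤ j)
    (hb'j : ∀ᵐ ω ∂μ, |b' ω| ≤ j) :
    ∫ ω, |b ω - b' ω| ∂μ + ∫ ω, |b ω + b' ω| ∂μ ≤ 2 * j := by
  have hdiff : Integrable (fun ω ↦ |b ω - b' ω|) μ := (hb.sub hb').abs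
  have hsum : Integrable (fun ω ↦ |b ω + b' ω|) μ := (hb.add hb').abs
  rw [← integral_add hdiff hsum]
  refine (integral_mono_ae (hdiff.add hsum) (integrable_const (2 * j)) ?_).trans_eq (by simp)
  filter_upwards [hbj, hb'j] with ω h h'
  rw [Pi.add_apply, abs_sub_add_abs_add_eq_two_mul_max]
  exact mul_le_mul_of_nonneg_left (max_le h h') zero_le_two

end

theorem chsh_spin_j
    {Ω : Type*} [MeasurableSpace Ω] (P : Measure Ω) [IsProbabilityMeasure P]
    (j : ℝ) (A A' B B' : Ω → ℝ)
    (hA : Measurable A) (hA' : Measurable A') (hB : Measurable B) (hB' : Measurable B')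
    (hAbd : ∀ᵐ ω ∂P, |A ω| ≤ 1) (hA'bd : ∀ᵐ ω ∂P, |A' ω| ≤ 1)
    (hBbd : ∀ᵐ ω ∂P, |B ω| ≤ j) (hB'bd : ∀ᵐ ω ∂P, |B' ω| ≤ j) :
    |(∫ ω, A ω * B ω ∂P) - ∫ ω, A ω * B' ω ∂P| +
      |(∫ ω, A' ω * B ω ∂P) + ∫ ω, A' ω * B' ω ∂P| ≤ 2 * j := by
  have iB : Integrable B P := .of_bound hB.aestronglyMeasurable j hBbd
  have iB' : Integrable B' P := .of_bound hB'.aestronglyMeasurable j hB'bd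
  have integrable_mul {X Y : Ω → ℝ} (hX : Measurable X) (hXbd : ∀ᵐ ω ∂P, |X ω| ≤ 1)
      (hY : Integrable Y P) :
      Integrable (fun ω ↦ X ω * Y ω) P :=
    hY.bdd_mul hX.aestronglyMeasurable hXbd
  have hsub : (∫ ω, A ω * B ω ∂P) - ∫ ω, A ω * B' ω ∂P =
      ∫ ω, A ω * (B ω - B' ω) ∂P := by
    simp_rw [mul_sub]
    exact (integral_sub (integrable_mul hA hAbd iB) (integrable_mul hA hAbd iB')).symm
  have hadd : (∫ ω, A' ω * B ω ∂P) + ∫ ω, A' ω * B' ω ∂P =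
      ∫ ω, A' ω * (B ω + B' ω) ∂P := by
    simp_rw [mul_add]
    exact (integral_add (integrable_mul hA' hA'bd iB) (integrable_mul hA' hA'bd iB')).symm
  rw [hsub, hadd]
  exact (add_le_add (abs_integral_mul_le_integral_abs hAbd (iB.sub iB'))
    (abs_integral_mul_le_integral_abs hA'bd (iB.add iB'))).trans
    (integral_abs_sub_add_integral_abs_add_le iB iB' hBbd hB'bd)
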